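/- arXiv:2107.00810 — 6 statements merged into one kernel-verified Lean document; each statement's English description precedes it below -/
import Mathlib

section
/- For positive reals L, a, d, k with k > d, there is a constant C depending only on d and k such that ∫₀^L r^{d-1}/(r+a)^k dr ≤ C · L^d · (a+L)^{-d} · a^{-(k-d)}. -/
open MeasureTheory Real

private lemma rpow_int_Ioo {c : ℝ} (hc : -1 < c) {L : ℝ} (hL : 0 < L) :
    ∫ r in Set.Ioo (0:ℝ) L, r ^ c = L ^ (c + 1) / (c + 1) := by
  rw [← integral_Ioc_eq_integral_Ioo, ← intervalIntegral.integral_of_le hL.le,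
    integral_rpow (Or.inl hc), Real.zero_rpow (by linarith)]
  ring

private lemma rpow_intOn_Ioo {c : ℝ} (hc : -1 < c) {L : ℝ} :
    IntegrableOn (fun r : ℝ => r ^ c) (Set.Ioo 0 L) :=
  (intervalIntegral.intervalIntegrable_rpow' hc).1.mono_set Set.Ioo_subset_Ioc_self

private lemma two_rpow_bound {u v d : ℝ} (hu : 0 ≤ u) (hv : 0 ≤ v) (huv : u ≤ 2 * v)
    (hd : 0 ≤ d) : u ^ d ≤ 2 ^ d * v ^ d := by
  calc u ^ d ≤ (2 * v) ^ d := Real.rpow_le_rpow hu huv hd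
    _ = 2 ^ d * v ^ d := Real.mul_rpow (by norm_num) hv

theorem stmt1 (d k : ℝ) (hd : 0 < d) (hk : 0 < k) (hkd : d < k) :
    ∃ C : ℝ, 0 < C ∧ ∀ L a : ℝ, 0 < L → 0 < a →
      ∫ r in Set.Ioo (0:ℝ) L, r ^ (d - 1) / (r + a) ^ k ≤
        C * L ^ d * (a + L) ^ (-d) * a ^ (-(k - d)) := by
  have hkd' : 0 < k - d := by linarith
  refine ⟨2 ^ d * (1 / d + 1 / (k - d)), by positivity, ?_⟩
  intro L a hL ha
  set f : ℝ → ℝ := fun r => r ^ (d - 1) / (r + a) ^ k with hfdef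
  have hfmeas : Measurable f := by fun_prop
  have haL : (0:ℝ) < a + L := by linarith
  -- domination by r^(d-1) * a^(-k) on (0, L)
  have hdom : ∀ r ∈ Set.Ioo (0:ℝ) L, f r ≤ r ^ (d - 1) * a ^ (-k) := by
    intro r hr
    have hr0 : 0 < r := hr.1
    have hpos : (0:ℝ) < (r + a) ^ k := by positivity
    have h1 : a ^ k ≤ (r + a) ^ k := Real.rpow_le_rpow ha.le (by linarith) hk.le
    rw [hfdef]
    simp only
    rw [div_le_iff₀ hpos]
    calc r ^ (d - 1) = r ^ (d - 1) * a ^ (-k) * a ^ k := by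
          rw [mul_assoc, ← Real.rpow_add ha]; simp
      _ ≤ r ^ (d - 1) * a ^ (-k) * (r + a) ^ k := by
          apply mul_le_mul_of_nonneg_left h1; positivity
  have hfnonneg : ∀ r ∈ Set.Ioo (0:ℝ) L, 0 ≤ f r := by
    intro r hr
    have hr0 : 0 < r := hr.1
    rw [hfdef]; positivity
  have hgint : IntegrableOn (fun r : ℝ => r ^ (d - 1) * a ^ (-k)) (Set.Ioo 0 L) :=
    (rpow_intOn_Ioo (by linarith)).mul_const _
  have hint : IntegrableOn f (Set.Ioo 0 L) := by
    apply Integrable.mono' hgint hfmeas.aestronglyMeasurable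
    filter_upwards [ae_restrict_mem measurableSet_Ioo] with r hr
    rw [Real.norm_of_nonneg (hfnonneg r hr)]
    exact hdom r hr
  -- value of ∫ r^(d-1)
  have hval : ∀ M : ℝ, 0 < M → ∫ r in Set.Ioo (0:ℝ) M, r ^ (d - 1) = M ^ d / d := by
    intro M hM
    rw [rpow_int_Ioo (by linarith) hM, show d - 1 + 1 = d by ring]
  rcases le_or_gt L a with hLa | haL2
  · -- case L ≤ a
    have step1 : ∫ r in Set.Ioo (0:ℝ) L, f r ≤ L ^ d / d * a ^ (-k) := by
      calc ∫ r in Set.Ioo (0:ℝ) L, f r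
          ≤ ∫ r in Set.Ioo (0:ℝ) L, r ^ (d - 1) * a ^ (-k) :=
            setIntegral_mono_on hint hgint measurableSet_Ioo hdom
        _ = (∫ r in Set.Ioo (0:ℝ) L, r ^ (d - 1)) * a ^ (-k) := integral_mul_const _ _
        _ = L ^ d / d * a ^ (-k) := by rw [hval L hL]
    refine step1.trans ?_
    have hsplit : a ^ (-k) = a ^ (-d) * a ^ (-(k - d)) := by
      rw [← Real.rpow_add ha]; ring_nf
    have hAB : a ^ (-d) ≤ 2 ^ d * (a + L) ^ (-d) := by
      have h2 : (a + L) ^ d ≤ 2 ^ d * a ^ d :=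
        two_rpow_bound haL.le ha.le (by linarith) hd.le
      rw [Real.rpow_neg ha.le, Real.rpow_neg haL.le]
      rw [inv_eq_one_div, inv_eq_one_div, mul_one_div,
        div_le_div_iff₀ (by positivity) (by positivity), one_mul]
      exact h2
    rw [hsplit]
    calc L ^ d / d * (a ^ (-d) * a ^ (-(k - d)))
        = 1 / d * a ^ (-d) * (L ^ d * a ^ (-(k - d))) := by ring
      _ ≤ 1 / d * (2 ^ d * (a + L) ^ (-d)) * (L ^ d * a ^ (-(k - d))) := by
          apply mul_le_mul_of_nonneg_right _ (by positivity)
          exact mul_le_mul_of_nonneg_left hAB (by positivity)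
      _ ≤ 2 ^ d * (1 / d + 1 / (k - d)) * L ^ d * (a + L) ^ (-d) * a ^ (-(k - d)) := by
          have hle : 1 / d * 2 ^ d ≤ 2 ^ d * (1 / d + 1 / (k - d)) := by
            have h1 : (0:ℝ) < 2 ^ d := by positivity
            have h2 : (0:ℝ) < 1 / (k - d) := by positivity
            nlinarith
          calc 1 / d * (2 ^ d * (a + L) ^ (-d)) * (L ^ d * a ^ (-(k - d)))
              = 1 / d * 2 ^ d * ((a + L) ^ (-d) * L ^ d * a ^ (-(k - d))) := by ring
            _ ≤ 2 ^ d * (1 / d + 1 / (k - d)) * ((a + L) ^ (-d) * L ^ d * a ^ (-(k - d))) := by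
                exact mul_le_mul_of_nonneg_right hle (by positivity)
            _ = 2 ^ d * (1 / d + 1 / (k - d)) * L ^ d * (a + L) ^ (-d) * a ^ (-(k - d)) := by
                ring
  · -- case a < L
    have hunion : Set.Ioc (0:ℝ) a ∪ Set.Ioo a L = Set.Ioo (0:ℝ) L :=
      Set.Ioc_union_Ioo_eq_Ioo ha.le haL2
    have hdisj : Disjoint (Set.Ioc (0:ℝ) a) (Set.Ioo a L) :=
      Set.disjoint_left.mpr fun x hx hx' => absurd hx.2 (not_le.mpr hx'.1)
    have hsub1 : Set.Ioc (0:ℝ) a ⊆ Set.Ioo (0:ℝ) L := by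
      rw [← hunion]; exact Set.subset_union_left
    have hsub2 : Set.Ioo a L ⊆ Set.Ioo (0:ℝ) L := by
      rw [← hunion]; exact Set.subset_union_right
    have heq : ∫ r in Set.Ioo (0:ℝ) L, f r =
        (∫ r in Set.Ioc (0:ℝ) a, f r) + ∫ r in Set.Ioo a L, f r := by
      rw [← hunion, setIntegral_union hdisj measurableSet_Ioo
        (hint.mono_set hsub1) (hint.mono_set hsub2)]
    rw [heq]
    -- bound first piece
    have hb1 : ∫ r in Set.Ioc (0:ℝ) a, f r ≤ 1 / d * a ^ (-(k - d)) := by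
      rw [integral_Ioc_eq_integral_Ioo]
      have hg1 : IntegrableOn (fun r : ℝ => r ^ (d - 1) * a ^ (-k)) (Set.Ioo 0 a) :=
        (rpow_intOn_Ioo (by linarith)).mul_const _
      have hi1 : IntegrableOn f (Set.Ioo 0 a) :=
        hint.mono_set (fun x hx => ⟨hx.1, lt_trans hx.2 haL2⟩)
      calc ∫ r in Set.Ioo (0:ℝ) a, f r
          ≤ ∫ r in Set.Ioo (0:ℝ) a, r ^ (d - 1) * a ^ (-k) := by
            apply setIntegral_mono_on hi1 hg1 measurableSet_Ioo
            intro r hr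
            exact hdom r ⟨hr.1, lt_trans hr.2 haL2⟩
        _ = (∫ r in Set.Ioo (0:ℝ) a, r ^ (d - 1)) * a ^ (-k) := integral_mul_const _ _
        _ = a ^ d / d * a ^ (-k) := by rw [hval a ha]
        _ = 1 / d * a ^ (-(k - d)) := by
            rw [div_mul_eq_mul_div, ← Real.rpow_add ha, show d + -k = -(k - d) by ring]
            ring
    -- bound second piece
    have h0notin : (0:ℝ) ∉ Set.uIcc a L := by
      rw [Set.mem_uIcc]; push_neg
      constructor <;> intro h <;> linarith
    have hg2 : IntegrableOn (fun r : ℝ => r ^ (d - 1 - k)) (Set.Ioo a L) :=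
      (intervalIntegral.intervalIntegrable_rpow (Or.inr h0notin)).1.mono_set Set.Ioo_subset_Ioc_self
    have hb2 : ∫ r in Set.Ioo a L, f r ≤ 1 / (k - d) * a ^ (-(k - d)) := by
      have hdom2 : ∀ r ∈ Set.Ioo a L, f r ≤ r ^ (d - 1 - k) := by
        intro r hr
        have hr0 : 0 < r := lt_trans ha hr.1
        have hpos : (0:ℝ) < (r + a) ^ k := by positivity
        have h1 : r ^ k ≤ (r + a) ^ k := Real.rpow_le_rpow hr0.le (by linarith) hk.le
        rw [hfdef]
        simp only
        rw [div_le_iff₀ hpos]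
        calc r ^ (d - 1) = r ^ (d - 1 - k) * r ^ k := by
              rw [← Real.rpow_add hr0]; ring_nf
          _ ≤ r ^ (d - 1 - k) * (r + a) ^ k :=
              mul_le_mul_of_nonneg_left h1 (by positivity)
      calc ∫ r in Set.Ioo a L, f r
          ≤ ∫ r in Set.Ioo a L, r ^ (d - 1 - k) :=
            setIntegral_mono_on (hint.mono_set hsub2) hg2 measurableSet_Ioo hdom2
        _ = (L ^ (d - k) - a ^ (d - k)) / (d - k) := by
            rw [← integral_Ioc_eq_integral_Ioo, ← intervalIntegral.integral_of_le haL2.le,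
              integral_rpow (Or.inr ⟨by intro h; linarith, h0notin⟩),
              show d - 1 - k + 1 = d - k by ring]
        _ ≤ 1 / (k - d) * a ^ (-(k - d)) := by
            have hLdk : (0:ℝ) ≤ L ^ (d - k) := Real.rpow_nonneg hL.le _
            have : a ^ (d - k) = a ^ (-(k - d)) := by rw [show d - k = -(k - d) by ring]
            rw [div_le_iff_of_neg (by linarith : d - k < 0), this]
            have key : 1 / (k - d) * a ^ (-(k - d)) * (d - k) = -a ^ (-(k - d)) := by
              field_simp
              ring
            rw [key]
            linarith
    have hone : 1 ≤ 2 ^ d * L ^ d * (a + L) ^ (-d) := by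
      have h2 : (a + L) ^ d ≤ 2 ^ d * L ^ d :=
        two_rpow_bound haL.le hL.le (by linarith) hd.le
      have hmul := mul_le_mul_of_nonneg_right h2 (Real.rpow_nonneg haL.le (-d))
      have h0 : d + -d = 0 := by ring
      rw [← Real.rpow_add haL, h0, Real.rpow_zero] at hmul
      exact hmul
    calc (∫ r in Set.Ioc (0:ℝ) a, f r) + ∫ r in Set.Ioo a L, f r
        ≤ 1 / d * a ^ (-(k - d)) + 1 / (k - d) * a ^ (-(k - d)) := add_le_add hb1 hb2
      _ = (1 / d + 1 / (k - d)) * (1 * a ^ (-(k - d))) := by ring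
      _ ≤ (1 / d + 1 / (k - d)) * (2 ^ d * L ^ d * (a + L) ^ (-d) * a ^ (-(k - d))) := by
          apply mul_le_mul_of_nonneg_left _ (by positivity)
          apply mul_le_mul_of_nonneg_right hone (Real.rpow_nonneg ha.le _)
      _ = 2 ^ d * (1 / d + 1 / (k - d)) * L ^ d * (a + L) ^ (-d) * a ^ (-(k - d)) := by
          ring
end

section
/- Let m ≥ 1 and 0 < b < 10. Then ∫₀¹ (-log u)/(b+u)^m du ≤ C (1 + b^{1-m}|log b| + δ_{m=1}(log b)²) for a constant C depending only on m, where δ_{m=1} = 1 if m = 1 and 0 otherwise. -/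
/-!
For `b ≤ 1` split the integral at `u = b`. On `(0, b)` the denominator is at least `b ^ m` and
`∫₀ᵇ -log u = b (1 - log b)`, giving `b ^ (1 - m) (1 + |log b|)`. On `(b, 1)` the denominator is
at least `u ^ m` and `-log u ≤ -log b`, giving `|log b| ∫_b^1 u ^ (-m)`, which is `(log b) ^ 2`
for `m = 1` and at most `b ^ (1 - m) |log b| / (m - 1)` for `m > 1`. The stray `b ^ (1 - m)` is
at most `exp (m - 1)` unless `|log b| ≥ 1`. For `b ≥ 1` the integral is at most `∫₀¹ -log u = 1`.
-/

open MeasureTheory Real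

lemma intervalIntegrable_neg_log_div_rpow {a c b : ℝ} (m : ℝ) (hb : 0 < b) (ha : 0 ≤ a)
    (hc : 0 ≤ c) :
    IntervalIntegrable (fun u => -log u / (b + u) ^ m) volume a c := by
  have hpos : ∀ u ∈ Set.uIcc a c, 0 < b + u := fun u hu => by
    have := (le_min ha hc).trans hu.1
    linarith
  simp only [div_eq_mul_inv]
  refine intervalIntegral.intervalIntegrable_log'.neg.mul_continuousOn ?_
  exact ((continuousOn_const.add continuousOn_id).rpow_const
    fun u hu => Or.inl (hpos u hu).ne').inv₀ fun u hu => (rpow_pos_of_pos (hpos u hu) m).ne'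

lemma integral_neg_log_from_zero (b : ℝ) : ∫ u in (0:ℝ)..b, -log u = b * (1 - log b) := by
  rw [intervalIntegral.integral_neg, integral_log]
  simp only [log_zero, mul_zero, sub_zero, add_zero, neg_sub]
  ring

lemma neg_log_nonneg {u : ℝ} (hu0 : 0 ≤ u) (hu1 : u ≤ 1) : 0 ≤ -log u :=
  neg_nonneg.2 (log_nonpos hu0 hu1)

lemma integral_neg_log_div_rpow_zero_to_le {m b : ℝ} (hm : 0 ≤ m) (hb : 0 < b) (hb1 : b ≤ 1) :
    ∫ u in (0:ℝ)..b, -log u / (b + u) ^ m ≤ b ^ (1 - m) * (1 - log b) := by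
  have hbm : 0 < b ^ m := rpow_pos_of_pos hb m
  calc ∫ u in (0:ℝ)..b, -log u / (b + u) ^ m
      ≤ ∫ u in (0:ℝ)..b, -log u / b ^ m := by
        refine intervalIntegral.integral_mono_on hb.le
          (intervalIntegrable_neg_log_div_rpow m hb le_rfl hb.le)
          (intervalIntegral.intervalIntegrable_log'.neg.div_const _) fun u hu => ?_
        exact div_le_div_of_nonneg_left (neg_log_nonneg hu.1 (hu.2.trans hb1)) hbm
          (rpow_le_rpow hb.le (by linarith [hu.1]) hm)
    _ = b ^ (1 - m) * (1 - log b) := by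
        rw [intervalIntegral.integral_div, integral_neg_log_from_zero, rpow_sub hb, rpow_one]
        ring

lemma integral_neg_log_div_rpow_to_one_le {m b : ℝ} (hm : 0 ≤ m) (hb : 0 < b) (hb1 : b ≤ 1) :
    ∫ u in b..1, -log u / (b + u) ^ m ≤ -log b * ∫ u in b..1, u ^ (-m) := by
  rw [← intervalIntegral.integral_const_mul]
  refine intervalIntegral.integral_mono_on hb1
    (intervalIntegrable_neg_log_div_rpow m hb hb.le zero_le_one)
    ((intervalIntegral.intervalIntegrable_rpow (Or.inr ?_)).const_mul _) fun u hu => ?_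
  · exact Set.notMem_uIcc_of_lt hb one_pos
  have hu0 : 0 < u := hb.trans_le hu.1
  rw [rpow_neg hu0.le, ← div_eq_mul_inv]
  exact div_le_div₀ (neg_log_nonneg hb.le hb1) (neg_le_neg (log_le_log hb hu.1))
    (rpow_pos_of_pos hu0 m) (rpow_le_rpow hu0.le (by linarith) hm)

lemma integral_rpow_neg_one_to_one {b : ℝ} (hb : 0 < b) :
    ∫ u in b..1, u ^ (-1 : ℝ) = -log b := by
  simp only [rpow_neg_one]
  rw [integral_inv_of_pos hb one_pos, one_div, log_inv]

lemma integral_rpow_neg_to_one_le {m b : ℝ} (hm : 1 < m) (hb : 0 < b) :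
    ∫ u in b..1, u ^ (-m) ≤ b ^ (1 - m) / (m - 1) := by
  rw [integral_rpow (Or.inr ⟨by linarith, Set.notMem_uIcc_of_lt hb one_pos⟩), one_rpow,
    show -m + 1 = 1 - m by ring, ← neg_div_neg_eq, neg_sub, neg_sub]
  have : 0 < m - 1 := by linarith
  gcongr
  linarith

lemma integral_neg_log_div_rpow_le_of_le_one {m b : ℝ} (hm : 0 ≤ m) (hb : 0 < b) (hb1 : b ≤ 1) :
    ∫ u in (0:ℝ)..1, -log u / (b + u) ^ m ≤
      b ^ (1 - m) * (1 + |log b|) + |log b| * ∫ u in b..1, u ^ (-m) := by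
  rw [abs_of_nonpos (log_nonpos hb.le hb1), ← sub_eq_add_neg,
    ← intervalIntegral.integral_add_adjacent_intervals
    (intervalIntegrable_neg_log_div_rpow m hb le_rfl hb.le)
    (intervalIntegrable_neg_log_div_rpow m hb hb.le zero_le_one)]
  exact add_le_add (integral_neg_log_div_rpow_zero_to_le hm hb hb1)
    (integral_neg_log_div_rpow_to_one_le hm hb hb1)

lemma integral_neg_log_div_rpow_le_one {m b : ℝ} (hm : 0 ≤ m) (hb : 1 ≤ b) :
    ∫ u in (0:ℝ)..1, -log u / (b + u) ^ m ≤ 1 := by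
  calc ∫ u in (0:ℝ)..1, -log u / (b + u) ^ m
      ≤ ∫ u in (0:ℝ)..1, -log u := by
        refine intervalIntegral.integral_mono_on zero_le_one
          (intervalIntegrable_neg_log_div_rpow m (by linarith) le_rfl zero_le_one)
          intervalIntegral.intervalIntegrable_log'.neg fun u hu => ?_
        exact div_le_self (neg_log_nonneg hu.1 hu.2) (one_le_rpow (by linarith [hu.1]) hm)
    _ = 1 := by simp

lemma rpow_one_sub_le_exp_add_mul_abs_log {m b : ℝ} (hm : 1 ≤ m) (hb : 0 < b) :
    b ^ (1 - m) ≤ exp (m - 1) + b ^ (1 - m) * |log b| := by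
  have hB : 0 < b ^ (1 - m) := rpow_pos_of_pos hb _
  rcases le_or_gt b (exp (-1)) with hbe | hbe
  · have hlog : log b ≤ -1 := (log_le_iff_le_exp hb).2 hbe
    have : 1 ≤ |log b| := by
      rw [abs_of_nonpos (by linarith)]
      linarith
    nlinarith [exp_pos (m - 1)]
  · have : b ^ (1 - m) ≤ exp (-1) ^ (1 - m) :=
      rpow_le_rpow_of_nonpos (exp_pos _) hbe.le (by linarith)
    rw [← exp_mul, show -1 * (1 - m) = m - 1 by ring] at this
    nlinarith [abs_nonneg (log b)]

lemma integral_neg_log_div_rpow_le_of_one_lt {m b : ℝ} (hm : 1 < m) (hb : 0 < b) (hb1 : b ≤ 1) :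
    ∫ u in (0:ℝ)..1, -log u / (b + u) ^ m ≤
      exp (m - 1) + (2 + 1 / (m - 1)) * (b ^ (1 - m) * |log b|) := by
  have hI := integral_neg_log_div_rpow_le_of_le_one (zero_le_one.trans hm.le) hb hb1
  have hT := mul_le_mul_of_nonneg_left (integral_rpow_neg_to_one_le hm hb) (abs_nonneg (log b))
  have hE := rpow_one_sub_le_exp_add_mul_abs_log hm.le hb
  rw [mul_div_assoc', div_eq_mul_one_div] at hT
  nlinarith

theorem stmt3 (m : ℝ) (hm : 1 ≤ m) :
    ∃ C : ℝ, 0 < C ∧ ∀ b : ℝ, 0 < b → b < 10 →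
      ∫ u in Set.Ioo (0:ℝ) 1, (-Real.log u) / (b + u) ^ m ≤
        C * (1 + b ^ (1 - m) * |Real.log b| +
          (if m = 1 then (Real.log b) ^ 2 else 0)) := by
  have hIoo (b : ℝ) : ∫ u in Set.Ioo (0:ℝ) 1, -log u / (b + u) ^ m =
      ∫ u in (0:ℝ)..1, -log u / (b + u) ^ m := by
    rw [intervalIntegral.integral_of_le zero_le_one, integral_Ioc_eq_integral_Ioo]
  have hLarge (b : ℝ) (hb1 : 1 < b) := integral_neg_log_div_rpow_le_one (zero_le_one.trans hm) hb1.le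
  rcases hm.eq_or_lt with rfl | hm1
  · refine ⟨1, one_pos, fun b hb _ => ?_⟩
    rw [hIoo, if_pos rfl, sub_self, rpow_zero, one_mul, one_mul, ← sq_abs]
    rcases le_or_gt b 1 with hb1 | hb1
    · have hI := integral_neg_log_div_rpow_le_of_le_one zero_le_one hb hb1
      rw [sub_self, rpow_zero, one_mul, integral_rpow_neg_one_to_one hb,
        ← abs_of_nonpos (log_nonpos hb.le hb1)] at hI
      nlinarith
    · nlinarith [hLarge b hb1, abs_nonneg (log b), sq_nonneg |log b|]
  · refine ⟨exp (m - 1) + 2 + 1 / (m - 1), by positivity, fun b hb _ => ?_⟩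
    have hk : 0 < 1 / (m - 1) := one_div_pos.2 (by linarith)
    have hBL : 0 ≤ b ^ (1 - m) * |log b| := by positivity
    rw [hIoo, if_neg hm1.ne', add_zero]
    rcases le_or_gt b 1 with hb1 | hb1
    · nlinarith [integral_neg_log_div_rpow_le_of_one_lt hm1 hb hb1, exp_pos (m - 1), hBL]
    · nlinarith [hLarge b hb1, exp_pos (m - 1), hBL]
end

section
/- For m > 1 and 0 < b < 1/2, the integral ∫₀¹ (-log u)/(b+u)^m du is bounded by C · b^{1-m} |log b| for a constant C depending only on m. -/
open MeasureTheory Real Set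

/-!
Split `(0, 1)` at `b`. On `(0, b]` bound `(b + u) ^ m` below by `b ^ m`, and use
`∫₀ᵇ -log u = b (1 - log b)`. On `(b, 1]` bound `-log u` by `-log b` and `(b + u) ^ m` below by
`u ^ m`, and use `∫_b^∞ u ^ (-m) = b ^ (1 - m) / (m - 1)`. Both pieces are `O(b ^ (1 - m) |log b|)`
because `|log b| ≥ 1/2` for `b < 1/2`.
-/

section

variable {b m : ℝ}

lemma integral_Ioc_zero_neg_log (hb : 0 < b) : ∫ u in Ioc 0 b, -log u = b * (1 - log b) := by
  rw [integral_neg, ← intervalIntegral.integral_of_le hb.le, integral_log_from_zero]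
  ring

lemma integrableOn_neg_log_div_add_rpow (hb : 0 < b) (hm : 0 ≤ m) (c : ℝ) :
    IntegrableOn (fun u => -log u / (b + u) ^ m) (Ioc 0 c) := by
  have hlog : IntegrableOn (fun u => |log u| / b ^ m) (Ioc 0 c) := by
    rcases le_total 0 c with hc | hc
    · exact ((intervalIntegrable_iff_integrableOn_Ioc_of_le hc).1
        intervalIntegral.intervalIntegrable_log').norm.div_const _
    · simp [Ioc_eq_empty_of_le hc]
  refine hlog.mono' ?_ ?_
  · refine ContinuousOn.aestronglyMeasurable ?_ measurableSet_Ioc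
    refine ContinuousOn.div (continuousOn_log.mono fun u hu => hu.1.ne').neg
      (ContinuousOn.rpow_const (by fun_prop) fun u hu => Or.inl (by linarith [hu.1]))
      fun u hu => by have := hu.1; positivity
  · filter_upwards [ae_restrict_mem measurableSet_Ioc] with u hu
    rw [norm_div, norm_neg, norm_eq_abs, norm_of_nonneg (by have := hu.1; positivity)]
    exact div_le_div_of_nonneg_left (abs_nonneg _) (by positivity)
      (rpow_le_rpow hb.le (by linarith [hu.1]) hm)

lemma setIntegral_Ioc_zero_neg_log_div_add_rpow_le (hb : 0 < b) (hb1 : b ≤ 1) (hm : 0 ≤ m) :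
    ∫ u in Ioc 0 b, -log u / (b + u) ^ m ≤ b ^ (1 - m) * (1 - log b) := by
  calc ∫ u in Ioc 0 b, -log u / (b + u) ^ m
      ≤ ∫ u in Ioc 0 b, -log u / b ^ m := by
        refine setIntegral_mono_on (integrableOn_neg_log_div_add_rpow hb hm b)
          ?_ measurableSet_Ioc fun u hu => ?_
        · exact ((intervalIntegrable_iff_integrableOn_Ioc_of_le hb.le).1
            intervalIntegral.intervalIntegrable_log').neg.div_const _
        · exact div_le_div_of_nonneg_left (neg_nonneg.2 (log_nonpos hu.1.le (hu.2.trans hb1)))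
            (by positivity) (rpow_le_rpow hb.le (by linarith [hu.1]) hm)
    _ = b ^ (1 - m) * (1 - log b) := by
        rw [integral_div, integral_Ioc_zero_neg_log hb, rpow_sub hb, rpow_one]
        ring

lemma setIntegral_Ioc_neg_log_div_add_rpow_le (hb : 0 < b) (hb1 : b ≤ 1) (hm : 1 < m) :
    ∫ u in Ioc b 1, -log u / (b + u) ^ m ≤ -log b * (b ^ (1 - m) / (m - 1)) := by
  have hint : IntegrableOn (fun u => -log b * u ^ (-m)) (Ioi b) :=
    (integrableOn_Ioi_rpow_of_lt (by linarith) hb).const_mul _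
  calc ∫ u in Ioc b 1, -log u / (b + u) ^ m
      ≤ ∫ u in Ioc b 1, -log b * u ^ (-m) := by
        refine setIntegral_mono_on ?_ (hint.mono_set Ioc_subset_Ioi_self) measurableSet_Ioc
          fun u hu => ?_
        · exact (integrableOn_neg_log_div_add_rpow hb (by linarith) 1).mono_set
            (Ioc_subset_Ioc_left hb.le)
        · have hu0 : 0 < u := hb.trans hu.1
          rw [rpow_neg hu0.le, ← div_eq_mul_inv]
          calc -log u / (b + u) ^ m ≤ -log u / u ^ m :=
                div_le_div_of_nonneg_left (neg_nonneg.2 (log_nonpos hu0.le hu.2))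
                  (by positivity) (rpow_le_rpow hu0.le (by linarith) (by linarith))
            _ ≤ -log b / u ^ m :=
                div_le_div_of_nonneg_right (neg_le_neg (log_le_log hb hu.1.le)) (by positivity)
    _ ≤ ∫ u in Ioi b, -log b * u ^ (-m) := by
        refine setIntegral_mono_set hint ?_ Ioc_subset_Ioi_self.eventuallyLE
        filter_upwards [ae_restrict_mem measurableSet_Ioi] with u hu
        exact mul_nonneg (neg_nonneg.2 (log_nonpos hb.le hb1)) (rpow_nonneg (hb.trans hu).le _)
    _ = -log b * (b ^ (1 - m) / (m - 1)) := by
        rw [integral_const_mul, integral_Ioi_rpow_of_lt (by linarith) hb]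
        congr 1
        rw [show -m + 1 = 1 - m by ring, neg_div, ← div_neg, neg_sub]

end

theorem stmt4 (m : ℝ) (hm : 1 < m) :
    ∃ C : ℝ, 0 < C ∧ ∀ b : ℝ, 0 < b → b < 1/2 →
      ∫ u in Set.Ioo (0:ℝ) 1, (-Real.log u) / (b + u) ^ m ≤
        C * b ^ (1 - m) * |Real.log b| := by
  have hm1 : 0 < m - 1 := by linarith
  refine ⟨3 + 1 / (m - 1), by positivity, fun b hb hb2 => ?_⟩
  have hint := integrableOn_neg_log_div_add_rpow hb (by linarith : 0 ≤ m) 1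
  rw [← integral_Ioc_eq_integral_Ioo, ← Ioc_union_Ioc_eq_Ioc hb.le (by linarith : b ≤ 1),
    setIntegral_union (Ioc_disjoint_Ioc_of_le le_rfl) measurableSet_Ioc
      (hint.mono_set (Ioc_subset_Ioc_right (by linarith)))
      (hint.mono_set (Ioc_subset_Ioc_left hb.le))]
  have hnear := setIntegral_Ioc_zero_neg_log_div_add_rpow_le hb (by linarith) (by linarith : 0 ≤ m)
  have hfar := setIntegral_Ioc_neg_log_div_add_rpow_le hb (by linarith) hm
  have hlog : log b ≤ -1 / 2 := by linarith [log_le_sub_one_of_pos hb]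
  have hB : 0 < b ^ (1 - m) := by positivity
  rw [abs_of_neg (by linarith)]
  calc _ ≤ b ^ (1 - m) * (1 - log b) + -log b * (b ^ (1 - m) / (m - 1)) := add_le_add hnear hfar
    _ ≤ 3 * b ^ (1 - m) * -log b + -log b * (b ^ (1 - m) / (m - 1)) := by
        gcongr ?_ + _; nlinarith
    _ = (3 + 1 / (m - 1)) * b ^ (1 - m) * -log b := by ring
end

section
/- Let 0 < a < 1/2 and define M₂ = ∫_{1/2}^∞ e^{-σ}(σ^{1/2-a} - (1/2)σ^{-1/2-a}) dσ and M₁ = ∫₀^{1/2} e^{-σ}((1/2)σ^{-1/2-a} - σ^{1/2-a}) dσ. Then M₂ < M₁. -/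
open MeasureTheory Real

theorem stmt7 (a : ℝ) (ha : 0 < a) (ha' : a < 1/2) :
    (∫ σ in Set.Ioi (1/2 : ℝ),
        Real.exp (-σ) * (σ ^ (1/2 - a) - (1/2) * σ ^ (-(1/2) - a))) <
    (∫ σ in Set.Ioo (0:ℝ) (1/2),
        Real.exp (-σ) * ((1/2) * σ ^ (-(1/2) - a) - σ ^ (1/2 - a))) := by
  have hs1 : (0:ℝ) < 1/2 - a := by linarith
  have hs2 : (0:ℝ) < 3/2 - a := by linarith
  have e1 : (-(1/2:ℝ) - a) = (1/2 - a) - 1 := by ring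
  have e2 : ((1/2:ℝ) - a) = (3/2 - a) - 1 := by ring
  -- integrability
  have hI1 : IntegrableOn (fun x : ℝ => Real.exp (-x) * x ^ (-(1/2) - a)) (Set.Ioi 0) := by
    rw [e1]; exact Real.GammaIntegral_convergent hs1
  have hI2 : IntegrableOn (fun x : ℝ => Real.exp (-x) * x ^ (1/2 - a)) (Set.Ioi 0) := by
    rw [e2]; exact Real.GammaIntegral_convergent hs2
  set f : ℝ → ℝ := fun x => Real.exp (-x) * ((1/2) * x ^ (-(1/2) - a) - x ^ (1/2 - a)) with hf
  have hIf : IntegrableOn f (Set.Ioi 0) := by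
    have : f = fun x => (1/2 : ℝ) * (Real.exp (-x) * x ^ (-(1/2) - a))
        - (Real.exp (-x) * x ^ (1/2 - a)) := by
      funext x; simp [hf]; ring
    rw [this]
    exact (hI1.const_mul _).sub hI2
  -- total integral value
  have hval : ∫ x in Set.Ioi (0:ℝ), f x
      = (1/2) * Real.Gamma (1/2 - a) - Real.Gamma (3/2 - a) := by
    have : ∫ x in Set.Ioi (0:ℝ), f x
        = (1/2) * (∫ x in Set.Ioi (0:ℝ), Real.exp (-x) * x ^ (-(1/2) - a))
          - ∫ x in Set.Ioi (0:ℝ), Real.exp (-x) * x ^ (1/2 - a) := by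
      rw [← MeasureTheory.integral_const_mul, ← integral_sub (hI1.const_mul _) hI2]
      congr 1; funext x; simp [hf]; ring
    rw [this, Real.Gamma_eq_integral hs1, Real.Gamma_eq_integral hs2, e1, e2]
  have hpos : 0 < ∫ x in Set.Ioi (0:ℝ), f x := by
    rw [hval]
    have hG : 0 < Real.Gamma (1/2 - a) := Real.Gamma_pos_of_pos hs1
    have : Real.Gamma (3/2 - a) = (1/2 - a) * Real.Gamma (1/2 - a) := by
      rw [← Real.Gamma_add_one (ne_of_gt hs1)]; ring_nf
    rw [this]
    nlinarith
  -- splitting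
  have hsplit : ∫ x in Set.Ioi (0:ℝ), f x
      = (∫ x in Set.Ioc (0:ℝ) (1/2), f x) + ∫ x in Set.Ioi (1/2:ℝ), f x := by
    rw [← setIntegral_union]
    · rw [Set.Ioc_union_Ioi_eq_Ioi (by norm_num : (0:ℝ) ≤ 1/2)]
    · exact Set.Ioc_disjoint_Ioi le_rfl
    · exact measurableSet_Ioi
    · exact hIf.mono_set Set.Ioc_subset_Ioi_self
    · exact hIf.mono_set (Set.Ioi_subset_Ioi (by norm_num))
  have hIoo : ∫ x in Set.Ioc (0:ℝ) (1/2), f x = ∫ x in Set.Ioo (0:ℝ) (1/2), f x :=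
    integral_Ioc_eq_integral_Ioo
  have hneg : (∫ σ in Set.Ioi (1/2 : ℝ),
        Real.exp (-σ) * (σ ^ (1/2 - a) - (1/2) * σ ^ (-(1/2) - a)))
      = - ∫ x in Set.Ioi (1/2:ℝ), f x := by
    rw [← integral_neg]
    congr 1; funext x; simp [hf]; ring
  rw [hneg]
  have : (∫ σ in Set.Ioo (0:ℝ) (1/2),
      Real.exp (-σ) * ((1/2) * σ ^ (-(1/2) - a) - σ ^ (1/2 - a)))
      = ∫ x in Set.Ioo (0:ℝ) (1/2), f x := rfl
  rw [this]
  have := hpos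
  rw [hsplit, hIoo] at this
  linarith
end

section
/- Let h, b, L > 0 and H(t) = (t² + h²)^{-1/2}. Define F(t) = H(t) - H(t+b) - H(t+L) + H(t+b+L) for t > -b. Then for any ε ∈ (0,1]: if t ≥ h/√(2-ε), then F(t) > (1/4) ε b L · H(t+b+L)³. -/
/-!
Two applications of the mean value theorem write the mixed second difference
`F(t) = H t - H (t+b) - H (t+L) + H (t+b+L)` as `b * L * H'' η` for some `η ∈ (t, t+b+L)`,
where `H'' η = (2η² - h²)(η² + h²)^(-5/2)`. Since `η ≥ t ≥ h/√(2-ε)`, one has `h² ≤ (2-ε)η²`,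
so `2η² - h² ≥ εη² ≥ (ε/3)(η² + h²)`, hence `H'' η ≥ (ε/3)(η² + h²)^(-3/2)`, and this is at least
`(ε/3) H(t+b+L)³` because `η < t+b+L`.
-/

open Real Set

theorem exists_mixed_second_difference_eq_mul {f f' f'' : ℝ → ℝ}
    (hf : ∀ x, HasDerivAt f (f' x) x) (hf' : ∀ x, HasDerivAt f' (f'' x) x)
    {b L : ℝ} (hb : 0 < b) (hL : 0 < L) (t : ℝ) :
    ∃ η ∈ Ioo t (t + b + L), f t - f (t + b) - f (t + L) + f (t + b + L) = b * L * f'' η := by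
  have hshift : ∀ x, HasDerivAt (fun τ => f τ - f (τ + L)) (f' x - f' (x + L)) x :=
    fun x => (hf x).sub ((hf (x + L)).comp_add_const x L)
  obtain ⟨ξ, ⟨htξ, hξb⟩, hξ⟩ := exists_hasDerivAt_eq_slope _ _ (by linarith : t < t + b)
    (continuous_iff_continuousAt.2 fun x => (hshift x).continuousAt).continuousOn
    fun x _ => hshift x
  obtain ⟨η, ⟨hξη, hηL⟩, hη⟩ := exists_hasDerivAt_eq_slope f' f'' (by linarith : ξ < ξ + L)
    (continuous_iff_continuousAt.2 fun x => (hf' x).continuousAt).continuousOn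
    fun x _ => hf' x
  refine ⟨η, ⟨by linarith, by linarith⟩, ?_⟩
  rw [eq_div_iff (by linarith)] at hξ hη
  rw [add_right_comm t b L] at hξ ⊢
  linear_combination hξ - b * hη

section SqAddSqRpow

variable {h : ℝ} (hh : h ≠ 0)
include hh

theorem hasDerivAt_sq_add_sq_rpow (p x : ℝ) :
    HasDerivAt (fun x => (x ^ 2 + h ^ 2) ^ p) (2 * p * x * (x ^ 2 + h ^ 2) ^ (p - 1)) x := by
  have hsq : HasDerivAt (fun x : ℝ => x ^ 2 + h ^ 2) (2 * x) x := by
    simpa using (hasDerivAt_pow 2 x).add_const (h ^ 2)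
  convert hsq.rpow_const (p := p) (Or.inl (by positivity)) using 1
  ring

theorem hasDerivAt_sq_add_sq_rpow_neg_one_half (x : ℝ) :
    HasDerivAt (fun x => (x ^ 2 + h ^ 2) ^ (-(1 / 2) : ℝ))
      (-x * (x ^ 2 + h ^ 2) ^ (-(3 / 2) : ℝ)) x := by
  convert hasDerivAt_sq_add_sq_rpow hh (-(1 / 2)) x using 2 <;> norm_num

theorem hasDerivAt_neg_mul_sq_add_sq_rpow_neg_three_halves (x : ℝ) :
    HasDerivAt (fun x => -x * (x ^ 2 + h ^ 2) ^ (-(3 / 2) : ℝ))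
      ((2 * x ^ 2 - h ^ 2) * (x ^ 2 + h ^ 2) ^ (-(5 / 2) : ℝ)) x := by
  have hpow := hasDerivAt_sq_add_sq_rpow hh (-(3 / 2)) x
  refine ((hasDerivAt_neg x).mul hpow).congr_deriv ?_
  rw [show (-(3 / 2) : ℝ) = -(5 / 2) + 1 by norm_num,
    rpow_add_one (by positivity : x ^ 2 + h ^ 2 ≠ 0)]
  norm_num
  ring

theorem div_three_mul_rpow_le_of_sq_le {ε η : ℝ} (hε : 0 ≤ ε)
    (hη : h ^ 2 ≤ (2 - ε) * η ^ 2) :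
    ε / 3 * (η ^ 2 + h ^ 2) ^ (-(3 / 2) : ℝ)
      ≤ (2 * η ^ 2 - h ^ 2) * (η ^ 2 + h ^ 2) ^ (-(5 / 2) : ℝ) := by
  have hnum : ε / 3 * (η ^ 2 + h ^ 2) ≤ 2 * η ^ 2 - h ^ 2 := by
    nlinarith [mul_nonneg hε (sq_nonneg η), mul_nonneg (sq_nonneg ε) (sq_nonneg η)]
  rw [show (-(3 / 2) : ℝ) = -(5 / 2) + 1 by norm_num,
    rpow_add_one (by positivity : η ^ 2 + h ^ 2 ≠ 0)]
  have hpow : 0 ≤ (η ^ 2 + h ^ 2) ^ (-(5 / 2) : ℝ) := by positivity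
  calc ε / 3 * ((η ^ 2 + h ^ 2) ^ (-(5 / 2) : ℝ) * (η ^ 2 + h ^ 2))
      = ε / 3 * (η ^ 2 + h ^ 2) * (η ^ 2 + h ^ 2) ^ (-(5 / 2) : ℝ) := by ring
    _ ≤ _ := mul_le_mul_of_nonneg_right hnum hpow

end SqAddSqRpow

theorem sq_le_mul_sq_of_div_sqrt_le {h c t : ℝ} (hh : 0 ≤ h) (hc : 0 < c)
    (ht : h / √c ≤ t) : h ^ 2 ≤ c * t ^ 2 := by
  rw [div_le_iff₀ (sqrt_pos.2 hc)] at ht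
  calc h ^ 2 ≤ (t * √c) ^ 2 := pow_le_pow_left₀ hh ht 2
    _ = c * t ^ 2 := by rw [mul_pow, sq_sqrt hc.le, mul_comm]

theorem stmt11_general (h b L : ℝ) (hh : 0 < h) (hb : 0 < b) (hL : 0 < L)
    (H : ℝ → ℝ) (hH : ∀ t, H t = (t ^ 2 + h ^ 2) ^ (-(1/2) : ℝ))
    (ε : ℝ) (hε : 0 < ε) (hε1 : ε ≤ 1)
    (t : ℝ) (ht' : h / Real.sqrt (2 - ε) ≤ t) :
    (1/4) * ε * b * L * (H (t + b + L)) ^ 3 <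
      H t - H (t + b) - H (t + L) + H (t + b + L) := by
  obtain ⟨η, ⟨htη, hηT⟩, hF⟩ := exists_mixed_second_difference_eq_mul
    (hasDerivAt_sq_add_sq_rpow_neg_one_half hh.ne')
    (hasDerivAt_neg_mul_sq_add_sq_rpow_neg_three_halves hh.ne') hb hL t
  rw [funext hH, hF]
  set T := t + b + L
  have ht : 0 < t := (div_pos hh (sqrt_pos.2 (by linarith))).trans_le ht'
  have hηh : h ^ 2 ≤ (2 - ε) * η ^ 2 :=
    (sq_le_mul_sq_of_div_sqrt_le hh.le (by linarith) ht').trans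
      (mul_le_mul_of_nonneg_left (pow_le_pow_left₀ ht.le htη.le 2) (by linarith))
  have hcube : ((T ^ 2 + h ^ 2) ^ (-(1 / 2) : ℝ)) ^ 3 = (T ^ 2 + h ^ 2) ^ (-(3 / 2) : ℝ) := by
    rw [← rpow_natCast, ← rpow_mul (by positivity)]
    norm_num
  have hmono : (T ^ 2 + h ^ 2) ^ (-(3 / 2) : ℝ) ≤ (η ^ 2 + h ^ 2) ^ (-(3 / 2) : ℝ) :=
    rpow_le_rpow_of_nonpos (by positivity)
      (add_le_add_left (pow_le_pow_left₀ (ht.trans htη).le hηT.le 2) _) (by norm_num)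
  rw [hcube]
  calc 1 / 4 * ε * b * L * (T ^ 2 + h ^ 2) ^ (-(3 / 2) : ℝ)
      < b * L * (ε / 3 * (T ^ 2 + h ^ 2) ^ (-(3 / 2) : ℝ)) := by
        have : 0 < b * L * ε * (T ^ 2 + h ^ 2) ^ (-(3 / 2) : ℝ) := by positivity
        linarith
    _ ≤ b * L * (ε / 3 * (η ^ 2 + h ^ 2) ^ (-(3 / 2) : ℝ)) := by gcongr
    _ ≤ b * L * ((2 * η ^ 2 - h ^ 2) * (η ^ 2 + h ^ 2) ^ (-(5 / 2) : ℝ)) :=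
        mul_le_mul_of_nonneg_left
          (div_three_mul_rpow_le_of_sq_le hh.ne' hε.le hηh) (by positivity)

theorem stmt11 (h b L : ℝ) (hh : 0 < h) (hb : 0 < b) (hL : 0 < L)
    (H : ℝ → ℝ) (hH : ∀ t, H t = (t ^ 2 + h ^ 2) ^ (-(1/2) : ℝ))
    (ε : ℝ) (hε : 0 < ε) (hε1 : ε ≤ 1)
    (t : ℝ) (ht : -b < t) (ht' : h / Real.sqrt (2 - ε) ≤ t) :
    (1/4) * ε * b * L * (H (t + b + L)) ^ 3 <
      H t - H (t + b) - H (t + L) + H (t + b + L) :=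
  stmt11_general h b L hh hb hL H hH ε hε hε1 t ht'
end

section
/- Let h, b, L > 0 and H(t) = (t² + h²)^{-1/2}. Define F(t) = H(t) - H(t+b) - H(t+L) + H(t+b+L) for t > -b. Then for any ε ∈ (0,1]: if t + b + L < h/√(2+ε) (and 0 < b ≤ L), then F(t) < -(1/4) ε b L · H(t+b+L)³. -/
/-!
The expression is a second-order mixed difference of `H`, so two applications of the mean value
theorem give `b L H''(η)` for some `η ∈ (t, t + b + L)`, with `H''(x) = (2x² - h²) H(x)⁵`.
Since `t > -b ≥ -L`, `|η| < w := t + b + L`; hence `2η² - h² < 2w² - h²`, which is at most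
`-(ε/4)(w² + h²)` because `w² (2 + ε) < h²` and `ε ≤ 1`. Finally `H(w) ≤ H(η)` turns
`-(ε/4) H(w)⁻² H(η)⁵` into the bound `-(ε/4) H(w)³`.
-/

open Real Set

theorem exists_sub_sub_add_eq_mul_mul_deriv2 {f f' f'' : ℝ → ℝ}
    (hf : ∀ x, HasDerivAt f (f' x) x) (hf' : ∀ x, HasDerivAt f' (f'' x) x)
    {t b L : ℝ} (hb : 0 < b) (hL : 0 < L) :
    ∃ η ∈ Ioo t (t + b + L), f t - f (t + b) - f (t + L) + f (t + b + L) = b * L * f'' η := by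
  set G : ℝ → ℝ := fun x => f x - f (x + L)
  have hG : ∀ x, HasDerivAt G (f' x - f' (x + L)) x := fun x =>
    (hf x).sub ((hf (x + L)).comp_add_const x L)
  obtain ⟨ξ, ⟨hξ₁, hξ₂⟩, hξ⟩ := exists_hasDerivAt_eq_slope G _ (by linarith : t < t + b)
    (fun x _ => (hG x).continuousAt.continuousWithinAt) fun x _ => hG x
  obtain ⟨η, ⟨hη₁, hη₂⟩, hη⟩ := exists_hasDerivAt_eq_slope f' f'' (by linarith : ξ < ξ + L)
    (fun x _ => (hf' x).continuousAt.continuousWithinAt) fun x _ => hf' x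
  refine ⟨η, ⟨by linarith, by linarith⟩, ?_⟩
  rw [add_sub_cancel_left, eq_div_iff hb.ne'] at hξ
  rw [add_sub_cancel_left, eq_div_iff hL.ne'] at hη
  simp only [G] at hξ
  linear_combination hξ - b * hη

section InvSqrt

variable {h : ℝ}

theorem sqrt_sq_add_sq_pos (hh : h ≠ 0) (x : ℝ) : 0 < √(x ^ 2 + h ^ 2) :=
  sqrt_pos.mpr (by positivity)

theorem hasDerivAt_sq_add_sq (x : ℝ) : HasDerivAt (fun x => x ^ 2 + h ^ 2) (2 * x) x := by
  simpa using (hasDerivAt_pow 2 x).add_const (h ^ 2)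

theorem hasDerivAt_inv_sqrt_sq_add_sq (hh : h ≠ 0) (x : ℝ) :
    HasDerivAt (fun x => (√(x ^ 2 + h ^ 2))⁻¹) (-x / √(x ^ 2 + h ^ 2) ^ 3) x := by
  have hs := (sqrt_sq_add_sq_pos hh x).ne'
  refine (((hasDerivAt_sq_add_sq x).sqrt (by positivity)).fun_inv hs).congr_deriv ?_
  field_simp

theorem hasDerivAt_neg_div_sqrt_sq_add_sq_pow_three (hh : h ≠ 0) (x : ℝ) :
    HasDerivAt (fun x => -x / √(x ^ 2 + h ^ 2) ^ 3)
      ((2 * x ^ 2 - h ^ 2) / √(x ^ 2 + h ^ 2) ^ 5) x := by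
  have hs := (sqrt_sq_add_sq_pos hh x).ne'
  refine ((hasDerivAt_neg' (x := x)).fun_div
    (((hasDerivAt_sq_add_sq x).sqrt (by positivity)).fun_pow 3) (pow_ne_zero 3 hs)).congr_deriv ?_
  have hs2 : √(x ^ 2 + h ^ 2) ^ 2 = x ^ 2 + h ^ 2 := sq_sqrt (by positivity)
  field_simp
  linear_combination (-√(x ^ 2 + h ^ 2) ^ 2) * hs2

end InvSqrt

theorem two_mul_sq_sub_sq_le {w h ε : ℝ} (hε : 0 < ε) (hε1 : ε ≤ 1)
    (hw : w ^ 2 * (2 + ε) < h ^ 2) :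
    2 * w ^ 2 - h ^ 2 ≤ -(ε / 4) * (w ^ 2 + h ^ 2) := by
  nlinarith [mul_lt_mul_of_pos_left hw (show (0:ℝ) < 4 - ε by linarith),
    mul_nonneg (mul_nonneg hε.le (show (0:ℝ) ≤ 1 - ε by linarith)) (sq_nonneg w)]

theorem sq_mul_lt_of_lt_div_sqrt {w h c : ℝ} (hw : 0 ≤ w) (hc : 0 < c) (hwh : w < h / √c) :
    w ^ 2 * c < h ^ 2 := by
  have hsc : 0 < √c := sqrt_pos.mpr hc
  have hlt : w * √c < h := (lt_div_iff₀ hsc).mp hwh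
  calc w ^ 2 * c = (w * √c) ^ 2 := by rw [mul_pow, sq_sqrt hc.le]
    _ < h ^ 2 := pow_lt_pow_left₀ hlt (by positivity) two_ne_zero

theorem two_mul_sq_sub_sq_div_lt {h w η ε : ℝ} (hh : h ≠ 0) (hε : 0 < ε) (hε1 : ε ≤ 1)
    (hη : |η| < w) (hw : w ^ 2 * (2 + ε) < h ^ 2) :
    (2 * η ^ 2 - h ^ 2) / √(η ^ 2 + h ^ 2) ^ 5 < -(1 / 4 * ε * (√(w ^ 2 + h ^ 2))⁻¹ ^ 3) := by
  have hηw : η ^ 2 < w ^ 2 := sq_lt_sq' (abs_lt.mp hη).1 (abs_lt.mp hη).2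
  have hsηw : √(η ^ 2 + h ^ 2) ≤ √(w ^ 2 + h ^ 2) := sqrt_le_sqrt (by linarith)
  have hnum : 2 * η ^ 2 - h ^ 2 < -(ε / 4 * √(w ^ 2 + h ^ 2) ^ 2) := by
    rw [sq_sqrt (by positivity)]
    linarith [two_mul_sq_sub_sq_le hε hε1 hw]
  calc (2 * η ^ 2 - h ^ 2) / √(η ^ 2 + h ^ 2) ^ 5
      < -(ε / 4 * √(w ^ 2 + h ^ 2) ^ 2) / √(η ^ 2 + h ^ 2) ^ 5 := by gcongr
    _ = -(ε / 4 * √(w ^ 2 + h ^ 2) ^ 2 / √(η ^ 2 + h ^ 2) ^ 5) := neg_div _ _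
    _ ≤ -(ε / 4 * √(w ^ 2 + h ^ 2) ^ 2 / √(w ^ 2 + h ^ 2) ^ 5) := by gcongr
    _ = -(1 / 4 * ε * (√(w ^ 2 + h ^ 2))⁻¹ ^ 3) := by field_simp

theorem stmt12 (h b L : ℝ) (hh : 0 < h) (hb : 0 < b) (hL : 0 < L) (hbL : b ≤ L)
    (H : ℝ → ℝ) (hH : ∀ t, H t = (t ^ 2 + h ^ 2) ^ (-(1/2) : ℝ))
    (ε : ℝ) (hε : 0 < ε) (hε1 : ε ≤ 1)
    (t : ℝ) (ht : -b < t) (ht' : t + b + L < h / Real.sqrt (2 + ε)) :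
    H t - H (t + b) - H (t + L) + H (t + b + L) <
      -((1/4) * ε * b * L * (H (t + b + L)) ^ 3) := by
  have hH' : H = fun x => (√(x ^ 2 + h ^ 2))⁻¹ := by
    funext x
    rw [hH, rpow_neg (by positivity), sqrt_eq_rpow, one_div]
  obtain ⟨η, ⟨hη₁, hη₂⟩, hF⟩ := exists_sub_sub_add_eq_mul_mul_deriv2
    (hasDerivAt_inv_sqrt_sq_add_sq hh.ne') (hasDerivAt_neg_div_sqrt_sq_add_sq_pow_three hh.ne')
    hb hL (t := t)
  have hw := sq_mul_lt_of_lt_div_sqrt (by linarith) (by linarith) ht'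
  have hbound := two_mul_sq_sub_sq_div_lt hh.ne' hε hε1
    (abs_lt.mpr ⟨by linarith, hη₂⟩ : |η| < t + b + L) hw
  rw [hH']
  simp only at hF ⊢
  rw [hF]
  linarith [mul_lt_mul_of_pos_left hbound (mul_pos hb hL)]
end
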